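/- Let f be a piecewise contracting interval map on X satisfying the separation property and D ⊂ X̃. Let K be a non-periodic basic piece of the attractor Λ (i.e. an X̃-minimal Cantor set component of Λ), and let θ be the itinerary of a point x ∈ K ∩ X̃. Then for every n ≥ 1, the set 𝒜_n(K) of atoms of generation n that intersect K equals {A_{i_1…i_n} : i_1…i_n ∈ L_n(θ)}; in particular #𝒜_n(K) = p_θ(n). -/

import Mathlib

open Set Filter Metric Topology

/-- A piecewise contracting interval map (PCIM) on the compact interval `X = [a,b]`:
there are `N ≥ 1` pairwise disjoint nonempty open (relative to `X`) subintervals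
whose closures cover `X`, and `f` contracts with rate `lam ∈ (0,1)` on each piece. -/
structure PCIM where
  a : ℝ
  b : ℝ
  hab : a < b
  N : ℕ
  hN : 1 ≤ N
  f : ℝ → ℝ
  lam : ℝ
  hlam₀ : 0 < lam
  hlam₁ : lam < 1
  piece : Fin N → Set ℝ
  piece_nonempty : ∀ i, (piece i).Nonempty
  piece_interval : ∀ i, ∃ c d : ℝ, piece i = Set.Ioo c d ∩ Set.Icc a b
  piece_disjoint : ∀ i j, i ≠ j → Disjoint (piece i) (piece j)
  cover : Set.Icc a b = ⋃ i, closure (piece i)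
  mapsTo : Set.MapsTo f (Set.Icc a b) (Set.Icc a b)
  contract : ∀ i, ∀ x ∈ piece i, ∀ y ∈ piece i, |f x - f y| ≤ lam * |x - y|

namespace PCIM

variable (P : PCIM)

/-- The underlying compact interval `X`. -/
def X : Set ℝ := Set.Icc P.a P.b

/-- `X* = ⋃ i, X_i`, the union of the contraction pieces. -/
def Xstar : Set ℝ := ⋃ i, P.piece i

/-- `Δ = X \ X*`, the set of boundaries of the contraction pieces. -/
def Delta : Set ℝ := P.X \ P.Xstar

/-- `X̃ = ⋂_{j ≥ 0} f⁻ʲ(X*)`, the points all of whose iterates are well defined. -/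
def Xtilde : Set ℝ := ⋂ j : ℕ, (P.f^[j]) ⁻¹' P.Xstar

/-- `D`: the set of one-sided limits of `f` at the points of `Δ`. -/
def D : Set ℝ :=
  {L | ∃ c ∈ P.Delta,
    ((𝓝[P.X ∩ Set.Iio c] c).NeBot ∧ Filter.Tendsto P.f (𝓝[P.X ∩ Set.Iio c] c) (𝓝 L)) ∨
    ((𝓝[P.X ∩ Set.Ioi c] c).NeBot ∧ Filter.Tendsto P.f (𝓝[P.X ∩ Set.Ioi c] c) (𝓝 L))}

/-- A set `A` is `f`-pseudo-invariant if for every `x ∈ A` at least one of the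
one-sided limits of `f` at `x` belongs to `A`. -/
def PseudoInvariant (A : Set ℝ) : Prop :=
  ∀ x ∈ A,
    (∃ L ∈ A, (𝓝[P.X ∩ Set.Iio x] x).NeBot ∧
      Filter.Tendsto P.f (𝓝[P.X ∩ Set.Iio x] x) (𝓝 L)) ∨
    (∃ L ∈ A, (𝓝[P.X ∩ Set.Ioi x] x).NeBot ∧
      Filter.Tendsto P.f (𝓝[P.X ∩ Set.Ioi x] x) (𝓝 L))

/-- `f` is piecewise monotonic: strictly monotone on each contraction piece. -/
def PiecewiseMonotonic : Prop :=
  ∀ i, StrictMonoOn P.f (P.piece i) ∨ StrictAntiOn P.f (P.piece i)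

/-- `f` satisfies the separation property: it is piecewise monotonic and the closures
of the images of distinct pieces are disjoint. -/
def SeparationProperty : Prop :=
  P.PiecewiseMonotonic ∧
    ∀ i j, i ≠ j → closure (P.f '' P.piece i) ∩ closure (P.f '' P.piece j) = ∅

/-- The iterates `Λ_n` defining the attractor: `Λ_0 = X`,
`Λ_{n+1} = cl (f (Λ_n \ Δ))`. -/
def LambdaIter : (P : PCIM) → ℕ → Set ℝ
  | Q, 0 => Q.X
  | Q, n + 1 => closure (Q.f '' (LambdaIter Q n \ Q.Delta))

/-- The attractor `Λ = ⋂_{n ≥ 1} Λ_n`. -/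
def Lambda : Set ℝ := ⋂ n : ℕ, P.LambdaIter (n + 1)

/-- The atom associated to the word `w = [i₁, …, iₙ]`:
`A_{i₁…iₙ} = F_{iₙ} ∘ ⋯ ∘ F_{i₁}(X)` where `F_i(A) = cl (f (A ∩ X_i))`. -/
def atomOf (w : List (Fin P.N)) : Set ℝ :=
  w.foldl (fun A i => closure (P.f '' (A ∩ P.piece i))) P.X

/-- `𝒜_n`: the set of (nonempty) atoms of generation `n`. -/
def atoms (n : ℕ) : Set (Set ℝ) :=
  {A | ∃ w : List (Fin P.N), w.length = n ∧ P.atomOf w = A ∧ A.Nonempty}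

/-- `θ` is the itinerary of `x`: `f^t(x) ∈ X_{θ_t}` for all `t`. -/
def IsItinerary (x : ℝ) (θ : ℕ → Fin P.N) : Prop :=
  ∀ t : ℕ, P.f^[t] x ∈ P.piece (θ t)

/-- The word `θ_t θ_{t+1} … θ_{t+n-1}` of length `n` of the sequence `θ`. -/
def word (θ : ℕ → Fin P.N) (t n : ℕ) : List (Fin P.N) :=
  (List.range n).map fun k => θ (t + k)

/-- `L_n(θ)`: the set of words of length `n` occurring in `θ`. -/
def lang (θ : ℕ → Fin P.N) (n : ℕ) : Set (List (Fin P.N)) :=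
  {w | ∃ t : ℕ, w = P.word θ t n}

/-- The complexity function `p_θ(n) = #L_n(θ)`. -/
noncomputable def complexity (θ : ℕ → Fin P.N) (n : ℕ) : ℕ := (P.lang θ n).ncard

/-- The forward orbit of `x` under `f`. -/
def orbit (x : ℝ) : Set ℝ := {y | ∃ k : ℕ, P.f^[k] x = y}

/-- The ω-limit set of `x` under `f`. -/
def omegaLimitSet (x : ℝ) : Set ℝ :=
  ⋂ n : ℕ, closure {y | ∃ m : ℕ, n ≤ m ∧ P.f^[m] x = y}

/-- A compact pseudo-invariant set `A` is `X̃`-minimal if the orbit of every point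
of `A ∩ X̃` is dense in `A`. -/
def XtildeMinimal (A : Set ℝ) : Prop :=
  IsCompact A ∧ P.PseudoInvariant A ∧ ∀ x ∈ A ∩ P.Xtilde, A ⊆ closure (P.orbit x)

/-- A periodic orbit contained in `X̃`. -/
def IsPeriodicOrbit (A : Set ℝ) : Prop :=
  ∃ x ∈ P.Xtilde, ∃ p : ℕ, 1 ≤ p ∧ P.f^[p] x = x ∧ A = P.orbit x

end PCIM

/-- A Cantor set: nonempty, compact, perfect and totally disconnected. -/
def IsCantorSet (A : Set ℝ) : Prop :=
  A.Nonempty ∧ IsCompact A ∧ Perfect A ∧ IsTotallyDisconnected A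

/-! Under the separation property, atoms of one generation with different words are pairwise
disjoint, since a map strictly monotone on an interval sends disjoint compact sets to sets with
disjoint closures. Along the itinerary, `f^[t+n] x` lies in the atom of the word `θ_t … θ_{t+n-1}`,
so each atom of a word of `L_n(θ)` meets `K`. Conversely, minimality at `f^[n] x ∈ K ∩ X̃` puts `K`
inside the closure of `{f^[t+n] x}`, hence inside the finite closed union of these atoms;
disjointness then identifies every atom meeting `K` with one of them and makes `w ↦ A_w`
injective on `L_n(θ)`. -/

theorem IsCompact.exists_clusterPt_of_mem_closure_image {X Y : Type*} [TopologicalSpace X]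
    [TopologicalSpace Y] {f : X → Y} {A S : Set X} (hS : IsCompact S) (hAS : A ⊆ S) {p : Y}
    (hp : p ∈ closure (f '' A)) : ∃ a ∈ S, ClusterPt a (𝓟 A ⊓ comap f (𝓝 p)) := by
  have : (𝓟 A ⊓ comap f (𝓝 p)).NeBot := by
    rw [← map_neBot_iff f, Filter.push_pull, map_principal, inf_comm]
    exact mem_closure_iff_clusterPt.1 hp
  exact hS (inf_le_left.trans (principal_mono.2 hAS))

theorem eq_of_clusterPt_comap_of_strictMonoOn {f : ℝ → ℝ} {C : Set ℝ} (hC : C.OrdConnected)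
    (hf : StrictMonoOn f C ∨ StrictAntiOn f C) {a b p : ℝ}
    (ha : ClusterPt a (𝓟 C ⊓ comap f (𝓝 p))) (hb : ClusterPt b (𝓟 C ⊓ comap f (𝓝 p))) :
    a = b := by
  suffices key : ∀ {a b : ℝ}, ClusterPt a (𝓟 C ⊓ comap f (𝓝 p)) →
      ClusterPt b (𝓟 C ⊓ comap f (𝓝 p)) → ¬ a < b from
    le_antisymm (not_lt.1 (key hb ha)) (not_lt.1 (key ha hb))
  intro a b ha hb hab
  have := ha.neBot
  have := hb.neBot
  obtain ⟨m₁, ham₁, hm₁b⟩ := exists_between hab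
  obtain ⟨m₂, hm₁₂, hm₂b⟩ := exists_between hm₁b
  have hlim {c : ℝ} : Tendsto f (𝓝 c ⊓ (𝓟 C ⊓ comap f (𝓝 p))) (𝓝 p) :=
    tendsto_comap.mono_left (inf_le_right.trans inf_le_right)
  have hmem {c : ℝ} : ∀ᶠ x in 𝓝 c ⊓ (𝓟 C ⊓ comap f (𝓝 p)), x ∈ C :=
    mem_inf_of_right (mem_inf_of_left (mem_principal_self C))
  have hleft : ∀ᶠ x in 𝓝 a ⊓ (𝓟 C ⊓ comap f (𝓝 p)), x ∈ C ∧ x < m₁ :=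
    hmem.and (mem_inf_of_left (Iio_mem_nhds ham₁))
  have hright : ∀ᶠ x in 𝓝 b ⊓ (𝓟 C ⊓ comap f (𝓝 p)), x ∈ C ∧ m₂ < x :=
    hmem.and (mem_inf_of_left (Ioi_mem_nhds hm₂b))
  obtain ⟨s, hsC, hs⟩ := hleft.exists
  obtain ⟨t, htC, ht⟩ := hright.exists
  have hm₁ : m₁ ∈ C := hC.out hsC htC ⟨hs.le, hm₁₂.le.trans ht.le⟩
  have hm₂ : m₂ ∈ C := hC.out hsC htC ⟨hs.le.trans hm₁₂.le, ht.le⟩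
  -- the limit `p` of `f` near `a` and near `b` would lie on both sides of `f m₁ ≠ f m₂`
  rcases hf with hf | hf
  · have h₁ : p ≤ f m₁ := le_of_tendsto hlim (hleft.mono fun x hx => (hf hx.1 hm₁ hx.2).le)
    have h₂ : f m₂ ≤ p := ge_of_tendsto hlim (hright.mono fun x hx => (hf hm₂ hx.1 hx.2).le)
    exact (hf hm₁ hm₂ hm₁₂).not_ge (h₂.trans h₁)
  · have h₁ : f m₁ ≤ p := ge_of_tendsto hlim (hleft.mono fun x hx => (hf hx.1 hm₁ hx.2).le)
    have h₂ : p ≤ f m₂ := le_of_tendsto hlim (hright.mono fun x hx => (hf hm₂ hx.1 hx.2).le)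
    exact (hf hm₁ hm₂ hm₁₂).not_ge (h₁.trans h₂)

theorem disjoint_closure_image_inter_of_strictMonoOn {f : ℝ → ℝ} {C S T : Set ℝ}
    (hC : C.OrdConnected) (hf : StrictMonoOn f C ∨ StrictAntiOn f C) (hS : IsCompact S)
    (hT : IsCompact T) (hST : Disjoint S T) :
    Disjoint (closure (f '' (S ∩ C))) (closure (f '' (T ∩ C))) := by
  refine Set.disjoint_left.2 fun p hpS hpT => ?_
  obtain ⟨a, haS, ha⟩ := hS.exists_clusterPt_of_mem_closure_image inter_subset_left hpS
  obtain ⟨b, hbT, hb⟩ := hT.exists_clusterPt_of_mem_closure_image inter_subset_left hpT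
  exact hST.ne_of_mem haS hbT (eq_of_clusterPt_comap_of_strictMonoOn hC hf
    (ha.mono (inf_le_inf_right _ (principal_mono.2 inter_subset_right)))
    (hb.mono (inf_le_inf_right _ (principal_mono.2 inter_subset_right))))

namespace PCIM

variable (P : PCIM)

theorem piece_subset_X (i : Fin P.N) : P.piece i ⊆ P.X := by
  obtain ⟨c, d, h⟩ := P.piece_interval i
  exact h ▸ inter_subset_right

theorem ordConnected_piece (i : Fin P.N) : (P.piece i).OrdConnected := by
  obtain ⟨c, d, h⟩ := P.piece_interval i
  exact h ▸ ordConnected_Ioo.inter ordConnected_Icc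

theorem piece_mem_nhdsWithin_X {i : Fin P.N} {y : ℝ} (hy : y ∈ P.piece i) :
    P.piece i ∈ 𝓝[P.X] y := by
  obtain ⟨c, d, h⟩ := P.piece_interval i
  rw [h] at hy
  rw [h, inter_comm]
  exact inter_mem_nhdsWithin _ (isOpen_Ioo.mem_nhds hy.1)

theorem continuousOn_piece (i : Fin P.N) : ContinuousOn P.f (P.piece i) :=
  (LipschitzOnWith.of_dist_le_mul (K := P.lam.toNNReal) fun x hx y hy => by
    simpa [Real.dist_eq, P.hlam₀.le] using P.contract i x hx y hy).continuousOn

theorem continuousWithinAt_X {i : Fin P.N} {y : ℝ} (hy : y ∈ P.piece i) :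
    ContinuousWithinAt P.f P.X y :=
  (P.continuousOn_piece i y hy).mono_of_mem_nhdsWithin (P.piece_mem_nhdsWithin_X hy)

theorem atomOf_concat (w : List (Fin P.N)) (i : Fin P.N) :
    P.atomOf (w ++ [i]) = closure (P.f '' (P.atomOf w ∩ P.piece i)) :=
  List.foldl_concat _ _ _ _

theorem isClosed_atomOf (w : List (Fin P.N)) : IsClosed (P.atomOf w) := by
  rcases w.eq_nil_or_concat' with rfl | ⟨u, i, rfl⟩
  · exact isClosed_Icc
  · rw [atomOf_concat]; exact isClosed_closure

theorem atomOf_subset_X (w : List (Fin P.N)) : P.atomOf w ⊆ P.X := by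
  rcases w.eq_nil_or_concat' with rfl | ⟨u, i, rfl⟩
  · exact subset_rfl
  · rw [atomOf_concat]
    refine closure_minimal ?_ isClosed_Icc
    rintro _ ⟨y, hy, rfl⟩
    exact P.mapsTo (P.piece_subset_X i hy.2)

theorem isCompact_atomOf (w : List (Fin P.N)) : IsCompact (P.atomOf w) :=
  isCompact_Icc.of_isClosed_subset (P.isClosed_atomOf w) (P.atomOf_subset_X w)

theorem word_length (θ : ℕ → Fin P.N) (t n : ℕ) : (P.word θ t n).length = n := by
  simp [word]

theorem word_succ (θ : ℕ → Fin P.N) (t n : ℕ) :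
    P.word θ t (n + 1) = P.word θ t n ++ [θ (t + n)] := by
  simp [word, List.range_succ]

theorem length_of_mem_lang {θ : ℕ → Fin P.N} {n : ℕ} {w : List (Fin P.N)}
    (hw : w ∈ P.lang θ n) : w.length = n := by
  obtain ⟨t, rfl⟩ := hw
  exact P.word_length θ t n

theorem lang_finite (θ : ℕ → Fin P.N) (n : ℕ) : (P.lang θ n).Finite :=
  (List.finite_length_eq (Fin P.N) n).subset fun _ => P.length_of_mem_lang

variable {P}

theorem SeparationProperty.disjoint_atomOf (hsep : P.SeparationProperty) {w w' : List (Fin P.N)}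
    (hlen : w.length = w'.length) (hne : w ≠ w') : Disjoint (P.atomOf w) (P.atomOf w') := by
  induction w using List.reverseRecOn generalizing w' with
  | nil => exact absurd (List.length_eq_zero_iff.1 hlen.symm).symm hne
  | append_singleton u i ih =>
    rcases w'.eq_nil_or_concat' with rfl | ⟨u', j, rfl⟩
    · simp at hlen
    rw [atomOf_concat, atomOf_concat]
    by_cases hij : i = j
    · subst hij
      have hu : u ≠ u' := fun h => hne (h ▸ rfl)
      exact disjoint_closure_image_inter_of_strictMonoOn (P.ordConnected_piece i) (hsep.1 i)
        (P.isCompact_atomOf u) (P.isCompact_atomOf u') (ih (by simpa using hlen) hu)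
    · refine (disjoint_iff_inter_eq_empty.2 (hsep.2 i j hij)).mono ?_ ?_ <;>
        exact closure_mono (image_mono inter_subset_right)

theorem SeparationProperty.eq_of_mem_atomOf (hsep : P.SeparationProperty) {w w' : List (Fin P.N)}
    (hlen : w.length = w'.length) {y : ℝ} (hy : y ∈ P.atomOf w) (hy' : y ∈ P.atomOf w') :
    w = w' :=
  by_contra fun hne => (hsep.disjoint_atomOf hlen hne).ne_of_mem hy hy' rfl

theorem PseudoInvariant.apply_mem {K : Set ℝ} (hK : P.PseudoInvariant K) {i : Fin P.N} {y : ℝ}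
    (hyK : y ∈ K) (hy : y ∈ P.piece i) : P.f y ∈ K := by
  have hlim (s : Set ℝ) : Tendsto P.f (𝓝[P.X ∩ s] y) (𝓝 (P.f y)) :=
    (P.continuousWithinAt_X hy).mono inter_subset_left
  rcases hK y hyK with ⟨L, hLK, hne, hL⟩ | ⟨L, hLK, hne, hL⟩
  · rwa [tendsto_nhds_unique (hlim _) hL]
  · rwa [tendsto_nhds_unique (hlim _) hL]

theorem PseudoInvariant.iterate_mem {K : Set ℝ} (hK : P.PseudoInvariant K)
    {x : ℝ} {θ : ℕ → Fin P.N} (hθ : P.IsItinerary x θ) (hxK : x ∈ K) (t : ℕ) :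
    P.f^[t] x ∈ K := by
  induction t with
  | zero => exact hxK
  | succ t ih => rw [Function.iterate_succ_apply']; exact hK.apply_mem ih (hθ t)

theorem IsItinerary.iterate_mem_Xtilde {x : ℝ} {θ : ℕ → Fin P.N} (hθ : P.IsItinerary x θ)
    (n : ℕ) : P.f^[n] x ∈ P.Xtilde :=
  mem_iInter.2 fun j => by
    rw [mem_preimage, ← Function.iterate_add_apply]
    exact mem_iUnion_of_mem _ (hθ (j + n))

theorem IsItinerary.iterate_mem_atomOf_word {x : ℝ} {θ : ℕ → Fin P.N}
    (hθ : P.IsItinerary x θ) (t n : ℕ) : P.f^[t + n] x ∈ P.atomOf (P.word θ t n) := by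
  induction n with
  | zero => exact P.piece_subset_X _ (hθ t)
  | succ n ih =>
    rw [word_succ, atomOf_concat, ← add_assoc, Function.iterate_succ_apply']
    exact subset_closure (mem_image_of_mem _ ⟨ih, hθ (t + n)⟩)

theorem IsItinerary.closure_orbit_iterate_subset {x : ℝ} {θ : ℕ → Fin P.N}
    (hθ : P.IsItinerary x θ) (n : ℕ) :
    closure (P.orbit (P.f^[n] x)) ⊆ ⋃ w ∈ P.lang θ n, P.atomOf w := by
  refine closure_minimal ?_ ((P.lang_finite θ n).isClosed_biUnion fun w _ => P.isClosed_atomOf w)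
  rintro _ ⟨k, rfl⟩
  rw [← Function.iterate_add_apply]
  exact mem_biUnion ⟨k, rfl⟩ (hθ.iterate_mem_atomOf_word k n)

end PCIM

theorem atoms_meeting_basic_piece_general (P : PCIM)
    (hsep : P.SeparationProperty)
    (K : Set ℝ)
    (hKmin : P.XtildeMinimal K)
    (x : ℝ) (hx : x ∈ K ∩ P.Xtilde) (θ : ℕ → Fin P.N) (hθ : P.IsItinerary x θ) :
    ∀ n : ℕ, 1 ≤ n →
      {A ∈ P.atoms n | (A ∩ K).Nonempty} =
        {A : Set ℝ | ∃ w ∈ P.lang θ n, A = P.atomOf w} ∧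
      {A ∈ P.atoms n | (A ∩ K).Nonempty}.ncard = P.complexity θ n := by
  intro n _
  obtain ⟨-, hKinv, hKdense⟩ := hKmin
  have hmeet (t : ℕ) : P.f^[t + n] x ∈ P.atomOf (P.word θ t n) ∩ K :=
    ⟨hθ.iterate_mem_atomOf_word t n, hKinv.iterate_mem hθ hx.1 _⟩
  have hcover : K ⊆ ⋃ w ∈ P.lang θ n, P.atomOf w :=
    (hKdense _ ⟨hKinv.iterate_mem hθ hx.1 n, hθ.iterate_mem_Xtilde n⟩).trans
      (hθ.closure_orbit_iterate_subset n)
  have heq : {A ∈ P.atoms n | (A ∩ K).Nonempty} = P.atomOf '' P.lang θ n := by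
    ext A
    constructor
    · rintro ⟨⟨w, hwn, rfl, -⟩, y, hyA, hyK⟩
      obtain ⟨w', hw', hyw'⟩ := mem_iUnion₂.1 (hcover hyK)
      obtain rfl : w = w' :=
        hsep.eq_of_mem_atomOf (by rw [hwn, P.length_of_mem_lang hw']) hyA hyw'
      exact ⟨w, hw', rfl⟩
    · rintro ⟨_, ⟨t, rfl⟩, rfl⟩
      exact ⟨⟨_, P.word_length θ t n, rfl, _, (hmeet t).1⟩, _, hmeet t⟩
  have hinj : InjOn P.atomOf (P.lang θ n) := by
    rintro w hw _ ⟨t, rfl⟩ hww'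
    exact hsep.eq_of_mem_atomOf (by rw [P.length_of_mem_lang hw, P.word_length])
      (hww' ▸ (hmeet t).1) (hmeet t).1
  refine ⟨heq.trans ?_, by rw [heq, hinj.ncard_image, PCIM.complexity]⟩
  ext A
  simp [eq_comm]

/-- Under the separation property and `D ⊆ X̃`, if `K` is a
non-periodic basic piece of `Λ` (an `X̃`-minimal Cantor set component of `Λ`)
and `θ` is the itinerary of a point `x ∈ K ∩ X̃`, then for every `n ≥ 1` the
atoms of generation `n` meeting `K` are exactly the atoms of the words of
`L_n(θ)`; in particular their number is `p_θ(n)`. -/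
theorem atoms_meeting_basic_piece (P : PCIM)
    (hsep : P.SeparationProperty) (hD : P.D ⊆ P.Xtilde)
    (K : Set ℝ) (hKΛ : K ⊆ P.Lambda)
    (hKmin : P.XtildeMinimal K) (hKC : IsCantorSet K)
    (x : ℝ) (hx : x ∈ K ∩ P.Xtilde) (θ : ℕ → Fin P.N) (hθ : P.IsItinerary x θ) :
    ∀ n : ℕ, 1 ≤ n →
      {A ∈ P.atoms n | (A ∩ K).Nonempty} =
        {A : Set ℝ | ∃ w ∈ P.lang θ n, A = P.atomOf w} ∧
      {A ∈ P.atoms n | (A ∩ K).Nonempty}.ncard = P.complexity θ n :=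
  atoms_meeting_basic_piece_general P hsep K hKmin x hx θ hθ
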